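/- arXiv:2202.12697 — 2 statements merged into one kernel-verified Lean document; each statement's English description precedes it below -/
import Mathlib

section
/- For all parameters A, B, C ∈ ℂ with C ≠ 0 and (C;q)_n ≠ 0 for all n, and all x, y ∈ ℂ with |x| < 1 and |y| < 1, the bibasic Humbert function satisfies (1−A)·Φ₁(qA,B;qC;q,q₁;x,y) = (1−A/C)·Φ₁(A,B;qC;q,q₁;x,y) + (A/C)(1−C)·Φ₁(A,B;C;q,q₁;x,y). (Equation (2.5), with C playing the role of q^{c−1}, so qC = q^c; in the paper's notation q^{a+1−c} = A/C here.) -/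
/-!
With `n = ℓ + k`, both `(1 - A) (qA;q)_n` and `(A;q)_n (1 - A qⁿ)` equal `(A;q)_{n+1}`, and
likewise for `C`; hence the coefficient ratio `(A;q)_n / (C;q)_n` satisfies the contiguous
relation termwise, and the identity for `Φ₁` follows by summing. Summing termwise is legitimate
because `(z;q)_n` converges to the infinite product `∏ (1 - z qʳ)`, which is nonzero when no
factor vanishes, so the coefficients of the three series are bounded and the series are
dominated by `∑ ‖x‖^ℓ ‖y‖^k`.
-/

open Complex

/-- The q-shifted factorial (z;q)_n = prod_{r=0}^{n-1} (1 - z q^r). -/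
noncomputable def qPoch (q z : ℂ) (n : ℕ) : ℂ :=
  ∏ r ∈ Finset.range n, (1 - z * q ^ r)

/-- The bibasic Humbert hypergeometric function Φ₁ on two independent bases q and q₁. -/
noncomputable def Phi1 (q q1 A B C x y : ℂ) : ℂ :=
  ∑' p : ℕ × ℕ,
    qPoch q A (p.1 + p.2) * qPoch q1 B p.1 /
      (qPoch q C (p.1 + p.2) * qPoch q1 q1 p.1 * qPoch q q p.2) * x ^ p.1 * y ^ p.2

/-- The Jackson p-derivative. -/
noncomputable def jackson (p : ℂ) (f : ℂ → ℂ) (x : ℂ) : ℂ :=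
  (f x - f (p * x)) / ((1 - p) * x)

open Filter Topology

section QPochhammer

variable {q : ℂ}

lemma qPoch_succ_right (q z : ℂ) (n : ℕ) :
    qPoch q z (n + 1) = qPoch q z n * (1 - z * q ^ n) :=
  Finset.prod_range_succ _ _

lemma qPoch_succ_left (q z : ℂ) (n : ℕ) : qPoch q z (n + 1) = (1 - z) * qPoch q (q * z) n := by
  simp only [qPoch, Finset.prod_range_succ', pow_zero, mul_one, pow_succ, mul_comm,
    mul_left_comm, mul_assoc]

lemma qPoch_self_ne_zero (hq : ‖q‖ < 1) (n : ℕ) : qPoch q q n ≠ 0 := by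
  refine Finset.prod_ne_zero_iff.2 fun r _ => sub_ne_zero.2 fun h => ?_
  have : ‖q * q ^ r‖ < 1 := by
    rw [← pow_succ', norm_pow]
    exact pow_lt_one₀ (norm_nonneg q) hq r.succ_ne_zero
  simp [← h] at this

lemma summable_norm_neg_mul_pow (hq : ‖q‖ < 1) (z : ℂ) :
    Summable fun r : ℕ => ‖-(z * q ^ r)‖ := by
  simpa only [norm_neg, norm_mul, norm_pow] using
    (summable_geometric_of_lt_one (norm_nonneg q) hq).mul_left ‖z‖

lemma tendsto_qPoch (hq : ‖q‖ < 1) (z : ℂ) :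
    Tendsto (qPoch q z) atTop (𝓝 (∏' r, (1 - z * q ^ r))) := by
  have := (multipliable_one_add_of_summable (summable_norm_neg_mul_pow hq z)).tendsto_prod_tprod_nat
  simp only [← sub_eq_add_neg] at this
  exact this

lemma tprod_one_sub_mul_pow_ne_zero (hq : ‖q‖ < 1) {z : ℂ} (hz : ∀ n, qPoch q z n ≠ 0) :
    ∏' r, (1 - z * q ^ r) ≠ 0 := by
  have hfactor : ∀ r, 1 + -(z * q ^ r) ≠ 0 := fun r => by
    rw [← sub_eq_add_neg]
    exact right_ne_zero_of_mul (qPoch_succ_right q z r ▸ hz (r + 1))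
  simpa only [← sub_eq_add_neg] using
    tprod_one_add_ne_zero_of_summable hfactor (summable_norm_neg_mul_pow hq z)

lemma exists_norm_qPoch_le (hq : ‖q‖ < 1) (z : ℂ) : ∃ M, ∀ n, ‖qPoch q z n‖ ≤ M := by
  obtain ⟨M, hM⟩ := (tendsto_qPoch hq z).norm.bddAbove_range
  exact ⟨M, fun n => hM ⟨n, rfl⟩⟩

lemma exists_norm_inv_qPoch_le (hq : ‖q‖ < 1) {z : ℂ} (hz : ∀ n, qPoch q z n ≠ 0) :
    ∃ M, ∀ n, ‖(qPoch q z n)⁻¹‖ ≤ M := by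
  obtain ⟨M, hM⟩ :=
    ((tendsto_qPoch hq z).inv₀ (tprod_one_sub_mul_pow_ne_zero hq hz)).norm.bddAbove_range
  exact ⟨M, fun n => hM ⟨n, rfl⟩⟩

end QPochhammer

lemma qPoch_contiguous (q A C : ℂ) (n : ℕ) (hC0 : C ≠ 0) (hC : qPoch q C n ≠ 0)
    (hqC : qPoch q (q * C) n ≠ 0) :
    (1 - A) * (qPoch q (q * A) n / qPoch q (q * C) n) =
      (1 - A / C) * (qPoch q A n / qPoch q (q * C) n)
        + A / C * (1 - C) * (qPoch q A n / qPoch q C n) := by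
  have hA_succ : (1 - A) * qPoch q (q * A) n = qPoch q A n * (1 - A * q ^ n) := by
    rw [← qPoch_succ_left, qPoch_succ_right]
  have hC_succ : (1 - C) * qPoch q (q * C) n = qPoch q C n * (1 - C * q ^ n) := by
    rw [← qPoch_succ_left, qPoch_succ_right]
  -- otherwise `field_simp` rewrites `q * A` to `A * q` inside `qPoch`
  generalize qPoch q (q * A) n = PqA at hA_succ ⊢
  generalize qPoch q (q * C) n = PqC at hC_succ hqC ⊢
  generalize qPoch q C n = PC at hC_succ hC ⊢
  field_simp
  linear_combination C * PC * hA_succ - A * qPoch q A n * hC_succ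

noncomputable def phi1Term (q q1 A B C x y : ℂ) (p : ℕ × ℕ) : ℂ :=
  qPoch q A (p.1 + p.2) * qPoch q1 B p.1 /
    (qPoch q C (p.1 + p.2) * qPoch q1 q1 p.1 * qPoch q q p.2) * x ^ p.1 * y ^ p.2

lemma Phi1_eq_tsum (q q1 A B C x y : ℂ) :
    Phi1 q q1 A B C x y = ∑' p, phi1Term q q1 A B C x y p := rfl

lemma phi1Term_contiguous (q q1 A B C x y : ℂ) (p : ℕ × ℕ) (hC0 : C ≠ 0)
    (hC : qPoch q C (p.1 + p.2) ≠ 0) (hqC : qPoch q (q * C) (p.1 + p.2) ≠ 0) :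
    (1 - A) * phi1Term q q1 (q * A) B (q * C) x y p =
      (1 - A / C) * phi1Term q q1 A B (q * C) x y p
        + A / C * (1 - C) * phi1Term q q1 A B C x y p := by
  simp only [phi1Term]
  linear_combination (qPoch q1 B p.1 / (qPoch q1 q1 p.1 * qPoch q q p.2) * x ^ p.1 * y ^ p.2) *
    qPoch_contiguous q A C (p.1 + p.2) hC0 hC hqC

lemma summable_phi1Term {q q1 : ℂ} (A B : ℂ) {C x y : ℂ} (hq : ‖q‖ < 1) (hq1 : ‖q1‖ < 1)
    (hC : ∀ n, qPoch q C n ≠ 0) (hx : ‖x‖ < 1) (hy : ‖y‖ < 1) :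
    Summable (phi1Term q q1 A B C x y) := by
  obtain ⟨MA, hMA⟩ := exists_norm_qPoch_le hq A
  obtain ⟨MB, hMB⟩ := exists_norm_qPoch_le hq1 B
  obtain ⟨MC, hMC⟩ := exists_norm_inv_qPoch_le hq hC
  obtain ⟨Mq1, hMq1⟩ := exists_norm_inv_qPoch_le hq1 (qPoch_self_ne_zero hq1)
  obtain ⟨Mq, hMq⟩ := exists_norm_inv_qPoch_le hq (qPoch_self_ne_zero hq)
  have hgeom : Summable fun p : ℕ × ℕ => ‖x‖ ^ p.1 * ‖y‖ ^ p.2 :=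
    (summable_geometric_of_lt_one (norm_nonneg x) hx).mul_of_nonneg
      (summable_geometric_of_lt_one (norm_nonneg y) hy) (fun _ => by positivity)
      (fun _ => by positivity)
  refine Summable.of_norm_bounded (hgeom.mul_left (MA * MB * MC * Mq1 * Mq)) fun p => ?_
  simp only [phi1Term, div_eq_mul_inv, mul_inv, norm_mul, norm_pow, ← mul_assoc]
  have hMA_nonneg : 0 ≤ MA := (norm_nonneg _).trans (hMA 0)
  have hMB_nonneg : 0 ≤ MB := (norm_nonneg _).trans (hMB 0)
  have hMC_nonneg : 0 ≤ MC := (norm_nonneg _).trans (hMC 0)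
  have hMq1_nonneg : 0 ≤ Mq1 := (norm_nonneg _).trans (hMq1 0)
  gcongr
  exacts [hMA _, hMB _, hMC _, hMq1 _, hMq _]

theorem stmt4_general (q q1 A B C x y : ℂ)
    (hq1 : ‖q‖ < 1)
    (hq11 : ‖q1‖ < 1)
    (hC : ∀ n : ℕ, qPoch q C n ≠ 0)
    (hC0 : C ≠ 0) (hx : ‖x‖ < 1) (hy : ‖y‖ < 1) :
    (1 - A) * Phi1 q q1 (q * A) B (q * C) x y =
      (1 - A / C) * Phi1 q q1 A B (q * C) x y
        + (A / C) * (1 - C) * Phi1 q q1 A B C x y := by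
  have hqC : ∀ n, qPoch q (q * C) n ≠ 0 := fun n h =>
    hC (n + 1) (by rw [qPoch_succ_left, h, mul_zero])
  have hterm := fun p : ℕ × ℕ => phi1Term_contiguous q q1 A B C x y p hC0 (hC _) (hqC _)
  simp only [Phi1_eq_tsum]
  rw [← tsum_mul_left, tsum_congr hterm,
    ((summable_phi1Term A B hq1 hq11 hqC hx hy).mul_left _).tsum_add
      ((summable_phi1Term A B hq1 hq11 hC hx hy).mul_left _),
    tsum_mul_left, tsum_mul_left]

theorem stmt4 (q q1 A B C x y : ℂ)
    (hq0 : 0 < ‖q‖) (hq1 : ‖q‖ < 1)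
    (hq10 : 0 < ‖q1‖) (hq11 : ‖q1‖ < 1)
    (hC : ∀ n : ℕ, qPoch q C n ≠ 0)
    (hC0 : C ≠ 0) (hx : ‖x‖ < 1) (hy : ‖y‖ < 1) :
    (1 - A) * Phi1 q q1 (q * A) B (q * C) x y =
      (1 - A / C) * Phi1 q q1 A B (q * C) x y
        + (A / C) * (1 - C) * Phi1 q q1 A B C x y :=
  stmt4_general q q1 A B C x y hq1 hq11 hC hC0 hx hy
end

section
/- For all parameters A, B, C ∈ ℂ with (C;q)_n ≠ 0 for all n, and all x, y ∈ ℂ with |x| < 1 and |y| < 1, the bibasic Humbert function admits the summation formula Φ₁(A,B;C;q,q₁;x,y) = Σ_{ℓ=0}^∞ [(A;q)_ℓ (B;q₁)_ℓ / ((C;q)_ℓ (q₁;q₁)_ℓ)] x^ℓ · Σ_{k=0}^∞ [(q^ℓ A;q)_k / ((q^ℓ C;q)_k (q;q)_k)] y^k, where the inner sum is the basic hypergeometric series ₂Φ₁(q^ℓ A, 0; q^ℓ C; q, y) and all series converge absolutely. (Equation (2.27).) -/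
open Complex

/-!
Since `(C;q)_{ℓ+k} = (C;q)_ℓ (q^ℓ C;q)_k`, every term of `Φ₁` factors as the `ℓ`-th term of the
outer series times the `k`-th term of the inner one. For `‖q‖ < 1` all the q-shifted factorials
`(q^ℓ z;q)_k` are bounded uniformly in `ℓ` and `k`, and when the `(C;q)_n` never vanish they are
also bounded away from `0`: the tail `(q^N C;q)_m` stays near `1` by the Weierstrass product
inequality. So the double series is dominated by `M ‖x‖^ℓ ‖y‖^k`, hence absolutely summable,
and summing it row by row gives the formula.
-/

open Finset Filter Topology

theorem one_sub_sum_norm_le_norm_prod_one_sub {ι 𝕜 : Type*} [NormedField 𝕜] (s : Finset ι)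
    (w : ι → 𝕜) : 1 - ∑ i ∈ s, ‖w i‖ ≤ ‖∏ i ∈ s, (1 - w i)‖ := by
  induction s using Finset.cons_induction with
  | empty => simp
  | cons a s _ ih =>
    rw [prod_cons, sum_cons, norm_mul]
    have ha : 1 - ‖w a‖ ≤ ‖1 - w a‖ := by simpa using norm_sub_norm_le (1 : 𝕜) (w a)
    have hS : 0 ≤ ∑ i ∈ s, ‖w i‖ := sum_nonneg fun i _ => norm_nonneg _
    have := norm_nonneg (1 - w a)
    have := norm_nonneg (∏ i ∈ s, (1 - w i))
    have := norm_nonneg (w a)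
    -- the bound is negative unless both factors' lower bounds are nonnegative
    rcases le_or_gt (1 - ‖w a‖) 0 with _ | ht
    · nlinarith
    rcases le_or_gt (1 - ∑ i ∈ s, ‖w i‖) 0 with _ | hs
    · nlinarith
    nlinarith [mul_le_mul ha ih hs.le (norm_nonneg _)]

theorem norm_prod_one_sub_le_exp_sum_norm {ι 𝕜 : Type*} [NormedField 𝕜] (s : Finset ι)
    (w : ι → 𝕜) : ‖∏ i ∈ s, (1 - w i)‖ ≤ Real.exp (∑ i ∈ s, ‖w i‖) := by
  rw [norm_prod]
  refine (prod_le_prod (fun i _ => norm_nonneg _) fun i _ => ?_).trans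
    (Real.prod_one_add_le_exp_sum s fun i => norm_nonneg (w i))
  simpa using norm_sub_le (1 : 𝕜) (w i)

theorem exists_pos_forall_le_of_eventually_le {f : ℕ → ℝ} (hf : ∀ n, 0 < f n) {c : ℝ}
    (hc : 0 < c) (h : ∀ᶠ n in atTop, c ≤ f n) : ∃ c' > 0, ∀ n, c' ≤ f n := by
  obtain ⟨N, hN⟩ := eventually_atTop.1 h
  clear h
  induction N generalizing c with
  | zero => exact ⟨c, hc, fun n => hN n n.zero_le⟩
  | succ N ih =>
    refine ih (lt_min hc (hf N)) fun n hn => ?_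
    rcases hn.eq_or_lt with rfl | hlt
    · exact min_le_right _ _
    · exact (min_le_left _ _).trans (hN n hlt)

section QPochhammer

variable {q : ℂ}

theorem qPoch_add (q z : ℂ) (m n : ℕ) :
    qPoch q z (m + n) = qPoch q z m * qPoch q (q ^ m * z) n := by
  unfold qPoch
  rw [prod_range_add]
  congr 1
  refine prod_congr rfl fun i _ => ?_
  ring

theorem qPoch_ne_zero {z : ℂ} (hq : ‖q‖ ≤ 1) (hz : ‖z‖ < 1) (n : ℕ) : qPoch q z n ≠ 0 := by
  refine prod_ne_zero_iff.2 fun r _ => sub_ne_zero.2 fun h => ?_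
  have : ‖z * q ^ r‖ < 1 := by
    rw [norm_mul, norm_pow]
    exact mul_lt_one_of_nonneg_of_lt_one_left (norm_nonneg z) hz (pow_le_one₀ (norm_nonneg q) hq)
  rw [← h, norm_one] at this
  exact this.false

theorem sum_norm_mul_pow_le (hq : ‖q‖ < 1) (z : ℂ) (n : ℕ) :
    ∑ r ∈ range n, ‖z * q ^ r‖ ≤ ‖z‖ * (1 - ‖q‖)⁻¹ := by
  simp only [norm_mul, norm_pow, ← mul_sum]
  gcongr
  calc ∑ r ∈ range n, ‖q‖ ^ r
      ≤ ∑' r, ‖q‖ ^ r := (summable_geometric_of_lt_one (norm_nonneg q) hq).sum_le_tsum _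
        fun i _ => by positivity
    _ = (1 - ‖q‖)⁻¹ := tsum_geometric_of_lt_one (norm_nonneg q) hq

theorem norm_qPoch_le (hq : ‖q‖ < 1) (z : ℂ) (n : ℕ) :
    ‖qPoch q z n‖ ≤ Real.exp (‖z‖ * (1 - ‖q‖)⁻¹) :=
  (norm_prod_one_sub_le_exp_sum_norm _ _).trans (Real.exp_le_exp.2 (sum_norm_mul_pow_le hq z n))

theorem one_sub_le_norm_qPoch (hq : ‖q‖ < 1) (z : ℂ) (n : ℕ) :
    1 - ‖z‖ * (1 - ‖q‖)⁻¹ ≤ ‖qPoch q z n‖ :=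
  (sub_le_sub_left (sum_norm_mul_pow_le hq z n) 1).trans
    (one_sub_sum_norm_le_norm_prod_one_sub _ _)

theorem norm_qPoch_pow_mul_le (hq : ‖q‖ < 1) (z : ℂ) (ℓ n : ℕ) :
    ‖qPoch q (q ^ ℓ * z) n‖ ≤ Real.exp (‖z‖ * (1 - ‖q‖)⁻¹) := by
  refine (norm_qPoch_le hq _ n).trans (Real.exp_le_exp.2 ?_)
  have : 0 ≤ (1 - ‖q‖)⁻¹ := inv_nonneg.2 (sub_nonneg.2 hq.le)
  rw [norm_mul, norm_pow]
  gcongr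
  exact mul_le_of_le_one_left (norm_nonneg z) (pow_le_one₀ (norm_nonneg q) hq.le)

theorem eventually_half_le_norm_qPoch_pow_mul (hq : ‖q‖ < 1) (z : ℂ) :
    ∀ᶠ N in atTop, ∀ m, (1 : ℝ) / 2 ≤ ‖qPoch q (q ^ N * z) m‖ := by
  have hlim : Tendsto (fun N : ℕ => 1 - ‖q ^ N * z‖ * (1 - ‖q‖)⁻¹) atTop (𝓝 1) := by
    simpa [norm_mul, norm_pow, mul_assoc] using
      ((tendsto_pow_atTop_nhds_zero_of_lt_one (norm_nonneg q) hq).mul_const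
        (‖z‖ * (1 - ‖q‖)⁻¹)).const_sub 1
  filter_upwards [hlim.eventually (le_mem_nhds (by norm_num : (1 : ℝ) / 2 < 1))] with N hN m
  exact hN.trans (one_sub_le_norm_qPoch hq _ m)

theorem exists_pos_le_norm_qPoch {z : ℂ} (hq : ‖q‖ < 1) (hz : ∀ n, qPoch q z n ≠ 0) :
    ∃ c > 0, ∀ n, c ≤ ‖qPoch q z n‖ := by
  obtain ⟨N, hN⟩ := (eventually_half_le_norm_qPoch_pow_mul hq z).exists
  have hc : 0 < ‖qPoch q z N‖ / 2 := half_pos (norm_pos_iff.2 (hz N))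
  refine exists_pos_forall_le_of_eventually_le (fun n => norm_pos_iff.2 (hz n)) hc ?_
  filter_upwards [eventually_ge_atTop N] with n hn
  obtain ⟨m, rfl⟩ := Nat.exists_eq_add_of_le hn
  rw [qPoch_add, norm_mul]
  nlinarith [hN m, norm_nonneg (qPoch q z N)]

theorem exists_pos_le_norm_qPoch_pow_mul {z : ℂ} (hq : ‖q‖ < 1) (hz : ∀ n, qPoch q z n ≠ 0) :
    ∃ c > 0, ∀ ℓ n, c ≤ ‖qPoch q (q ^ ℓ * z) n‖ := by
  obtain ⟨c, hc, hcz⟩ := exists_pos_le_norm_qPoch hq hz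
  set M := Real.exp (‖z‖ * (1 - ‖q‖)⁻¹)
  refine ⟨c / M, by positivity, fun ℓ n => (div_le_iff₀' (Real.exp_pos _)).2 ?_⟩
  calc c ≤ ‖qPoch q z (ℓ + n)‖ := hcz _
    _ = ‖qPoch q z ℓ‖ * ‖qPoch q (q ^ ℓ * z) n‖ := by rw [qPoch_add, norm_mul]
    _ ≤ M * ‖qPoch q (q ^ ℓ * z) n‖ := by gcongr; exact norm_qPoch_le hq z ℓ

end QPochhammer

section Summability

variable {𝕜 : Type*} [NormedField 𝕜] [CompleteSpace 𝕜] {x y : 𝕜}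

theorem summable_mul_pow_of_norm_le {f : ℕ → 𝕜} {M : ℝ} (hf : ∀ k, ‖f k‖ ≤ M) (hy : ‖y‖ < 1) :
    Summable fun k => f k * y ^ k :=
  .of_norm_bounded ((summable_geometric_of_lt_one (norm_nonneg y) hy).mul_left M) fun k => by
    rw [norm_mul, norm_pow]
    exact mul_le_mul_of_nonneg_right (hf k) (by positivity)

theorem summable_mul_pow_mul_mul_pow_of_norm_le {a : ℕ → 𝕜} {b : ℕ → ℕ → 𝕜} {Ma Mb : ℝ}
    (ha : ∀ ℓ, ‖a ℓ‖ ≤ Ma) (hb : ∀ ℓ k, ‖b ℓ k‖ ≤ Mb) (hx : ‖x‖ < 1) (hy : ‖y‖ < 1) :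
    Summable fun p : ℕ × ℕ => a p.1 * x ^ p.1 * (b p.1 p.2 * y ^ p.2) := by
  have hMa : 0 ≤ Ma := (norm_nonneg _).trans (ha 0)
  have hMb : 0 ≤ Mb := (norm_nonneg _).trans (hb 0 0)
  refine .of_norm_bounded
    (((summable_geometric_of_lt_one (norm_nonneg x) hx).mul_left Ma).mul_of_nonneg
      ((summable_geometric_of_lt_one (norm_nonneg y) hy).mul_left Mb)
      (fun _ => by positivity) fun _ => by positivity) fun p => ?_
  simp only [norm_mul, norm_pow]
  gcongr
  exacts [ha _, hb _ _]

end Summability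

theorem Phi1_term_eq_mul (q q1 A B C x y : ℂ) (ℓ k : ℕ) :
    qPoch q A (ℓ + k) * qPoch q1 B ℓ / (qPoch q C (ℓ + k) * qPoch q1 q1 ℓ * qPoch q q k) *
        x ^ ℓ * y ^ k =
      qPoch q A ℓ * qPoch q1 B ℓ / (qPoch q C ℓ * qPoch q1 q1 ℓ) * x ^ ℓ *
        (qPoch q (q ^ ℓ * A) k / (qPoch q (q ^ ℓ * C) k * qPoch q q k) * y ^ k) := by
  rw [qPoch_add q A, qPoch_add q C]
  simp only [div_eq_mul_inv, mul_inv]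
  ring

theorem stmt19_general (q q1 A B C x y : ℂ)
    (hq1 : ‖q‖ < 1)
    (hq11 : ‖q1‖ < 1)
    (hC : ∀ n : ℕ, qPoch q C n ≠ 0)
    (hx : ‖x‖ < 1) (hy : ‖y‖ < 1) :
    (∀ ℓ : ℕ, Summable (fun k : ℕ =>
        qPoch q (q ^ ℓ * A) k / (qPoch q (q ^ ℓ * C) k * qPoch q q k) * y ^ k)) ∧
    Summable (fun ℓ : ℕ =>
        qPoch q A ℓ * qPoch q1 B ℓ / (qPoch q C ℓ * qPoch q1 q1 ℓ) * x ^ ℓ *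
          ∑' k : ℕ,
            qPoch q (q ^ ℓ * A) k / (qPoch q (q ^ ℓ * C) k * qPoch q q k) * y ^ k) ∧
    Phi1 q q1 A B C x y =
      ∑' ℓ : ℕ,
        qPoch q A ℓ * qPoch q1 B ℓ / (qPoch q C ℓ * qPoch q1 q1 ℓ) * x ^ ℓ *
          ∑' k : ℕ,
            qPoch q (q ^ ℓ * A) k / (qPoch q (q ^ ℓ * C) k * qPoch q q k) * y ^ k := by
  obtain ⟨cC, hcC, hCC⟩ := exists_pos_le_norm_qPoch_pow_mul hq1 hC
  obtain ⟨cq, hcq, hqq⟩ := exists_pos_le_norm_qPoch hq1 (qPoch_ne_zero hq1.le hq1)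
  obtain ⟨c1, hc1, hq1q1⟩ := exists_pos_le_norm_qPoch hq11 (qPoch_ne_zero hq11.le hq11)
  have hinner (ℓ k : ℕ) :
      ‖qPoch q (q ^ ℓ * A) k / (qPoch q (q ^ ℓ * C) k * qPoch q q k)‖ ≤
        Real.exp (‖A‖ * (1 - ‖q‖)⁻¹) / (cC * cq) := by
    rw [norm_div, norm_mul]
    gcongr
    exacts [norm_qPoch_pow_mul_le hq1 A ℓ k, hCC ℓ k, hqq k]
  have houter (ℓ : ℕ) :
      ‖qPoch q A ℓ * qPoch q1 B ℓ / (qPoch q C ℓ * qPoch q1 q1 ℓ)‖ ≤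
        Real.exp (‖A‖ * (1 - ‖q‖)⁻¹) * Real.exp (‖B‖ * (1 - ‖q1‖)⁻¹) / (cC * c1) := by
    rw [norm_div, norm_mul, norm_mul]
    gcongr
    exacts [norm_qPoch_le hq1 A ℓ, norm_qPoch_le hq11 B ℓ, by simpa using hCC 0 ℓ, hq1q1 ℓ]
  have hsum := summable_mul_pow_mul_mul_pow_of_norm_le houter hinner hx hy
  have hPhi1 : Phi1 q q1 A B C x y = ∑' p : ℕ × ℕ, _ :=
    tsum_congr fun p => Phi1_term_eq_mul q q1 A B C x y p.1 p.2
  refine ⟨fun ℓ => summable_mul_pow_of_norm_le (hinner ℓ) hy, ?_, ?_⟩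
  · simpa only [tsum_mul_left] using hsum.prod
  · rw [hPhi1, hsum.tsum_prod]
    simp only [tsum_mul_left]

theorem stmt19 (q q1 A B C x y : ℂ)
    (hq0 : 0 < ‖q‖) (hq1 : ‖q‖ < 1)
    (hq10 : 0 < ‖q1‖) (hq11 : ‖q1‖ < 1)
    (hC : ∀ n : ℕ, qPoch q C n ≠ 0)
    (hx : ‖x‖ < 1) (hy : ‖y‖ < 1) :
    (∀ ℓ : ℕ, Summable (fun k : ℕ =>
        qPoch q (q ^ ℓ * A) k / (qPoch q (q ^ ℓ * C) k * qPoch q q k) * y ^ k)) ∧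
    Summable (fun ℓ : ℕ =>
        qPoch q A ℓ * qPoch q1 B ℓ / (qPoch q C ℓ * qPoch q1 q1 ℓ) * x ^ ℓ *
          ∑' k : ℕ,
            qPoch q (q ^ ℓ * A) k / (qPoch q (q ^ ℓ * C) k * qPoch q q k) * y ^ k) ∧
    Phi1 q q1 A B C x y =
      ∑' ℓ : ℕ,
        qPoch q A ℓ * qPoch q1 B ℓ / (qPoch q C ℓ * qPoch q1 q1 ℓ) * x ^ ℓ *
          ∑' k : ℕ,
            qPoch q (q ^ ℓ * A) k / (qPoch q (q ^ ℓ * C) k * qPoch q q k) * y ^ k :=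
  stmt19_general q q1 A B C x y hq1 hq11 hC hx hy
end
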